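/- arXiv:2202.13809 — 2 statements merged into one kernel-verified Lean document; each statement's English description precedes it below -/
import Mathlib

section
/- If F: A^Z → A^Z is a left expansive cellular automaton, x ∈ A^Z, and there exists t ≥ 1 such that frac(F^t(x)) = frac(x) (the right halves y ↦ (y[j])_{j≥0} of F^t(x) and x agree), then x is eventually periodic. -/
/-!
Since the right half of `x` returns after `t` steps and `F` has left radius `m`, the space-time
diagram of `x` is `t`-periodic in time on the cone `{(j, σ) | σ * m ≤ j}`. Far enough to the
right, the `w × t` block of the diagram at cell `j` therefore determines every column
`j, …, j + w - 1` up to any fixed time, so left expansivity makes the block at `j + 1` determine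
the block at `j`. A sequence in a finite set in which each term determines its predecessor is
purely periodic, and `x j` is the corner of the block at `j`.
-/

/-- `F` is a cellular automaton: it is given by some `(m,n)` local rule. -/
def IsCA {A : Type*} (F : (ℤ → A) → ℤ → A) : Prop :=
  ∃ (m n : ℕ) (f : (Fin (m + n + 1) → A) → A),
    ∀ x i, F x i = f fun k => x (i - (m : ℤ) + (k.val : ℤ))

/-- `F` is left expansive with dimensions `(h, d, w)`: the contents of a translated
rectangle (spatial offsets `0,...,w-1`, time iterates `t - b` for `-d ≤ b ≤ h`) in any two
space-time diagrams determine the symbol immediately to the left of the rectangle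
(at time iterate `t`). -/
def LeftExpansive {A : Type*} (F : (ℤ → A) → ℤ → A) (h d w : ℕ) : Prop :=
  ∀ (x₁ x₂ : ℤ → A) (i₁ i₂ : ℤ) (t₁ t₂ : ℕ), h ≤ t₁ → h ≤ t₂ →
    (∀ (a : ℕ) (b : ℤ), a < w → -(d : ℤ) ≤ b → b ≤ (h : ℤ) →
      F^[((t₁ : ℤ) - b).toNat] x₁ (i₁ + (a : ℤ)) = F^[((t₂ : ℤ) - b).toNat] x₂ (i₂ + (a : ℤ))) →
    F^[t₁] x₁ (i₁ - 1) = F^[t₂] x₂ (i₂ - 1)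

/-- A one-sided sequence is eventually `p`-periodic for some `p ≥ 1`. -/
def EvPeriodicSeq {B : Type*} (y : ℕ → B) : Prop :=
  ∃ p : ℕ, 1 ≤ p ∧ ∃ c : ℕ, ∀ t, c ≤ t → y (t + p) = y t

/-- A two-sided configuration is eventually periodic (to the right). -/
def EvPeriodicConfig {A : Type*} (x : ℤ → A) : Prop :=
  ∃ p : ℕ, 1 ≤ p ∧ ∃ c : ℤ, ∀ i : ℤ, c ≤ i → x (i + p) = x i

def spaceTimeBlock {A : Type*} (F : (ℤ → A) → ℤ → A) (x : ℤ → A) (w t : ℕ) (j : ℤ) :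
    Fin w → Fin t → A :=
  fun a r => F^[r] x (j + a)

theorem Function.exists_periodic_of_succ_eq_succ {S : Type*} [Finite S] (Q : ℕ → S)
    (hQ : ∀ a b, Q (a + 1) = Q (b + 1) → Q a = Q b) :
    ∃ q, 1 ≤ q ∧ Function.Periodic Q q := by
  have hback : ∀ k a b, Q (a + k) = Q (b + k) → Q a = Q b := by
    intro k
    induction k with
    | zero => exact fun a b => id
    | succ k ih => exact fun a b hab => ih a b (hQ _ _ hab)
  obtain ⟨v, hv⟩ := Finite.exists_infinite_fiber Q
  have hv : (Q ⁻¹' {v}).Infinite := Set.infinite_coe_iff.mp hv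
  obtain ⟨n₁, hn₁ : Q n₁ = v⟩ := hv.nonempty
  obtain ⟨n₂, hn₂ : Q n₂ = v, hlt⟩ := hv.exists_gt n₁
  set q := n₂ - n₁
  refine ⟨q, by omega, fun n => ?_⟩
  obtain ⟨M, hM : Q M = v, hnM⟩ := hv.exists_gt (n + n₂)
  have hMq : Q (M - q) = Q M :=
    (hback q _ n₁ (by rw [Nat.sub_add_cancel (by omega), show n₁ + q = n₂ by omega, hM, hn₂])).trans
      (hn₁.trans hM.symm)
  exact (hback (M - q - n) n (n + q) (by rw [show n + (M - q - n) = M - q by omega,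
    show n + q + (M - q - n) = M by omega, hMq])).symm

section LocalRule

variable {A : Type*} {F : (ℤ → A) → ℤ → A} {m n : ℕ} {f : (Fin (m + n + 1) → A) → A}

theorem iterate_apply_eq_of_eqOn (hf : ∀ x i, F x i = f fun k => x (i - (m : ℤ) + (k.val : ℤ)))
    (s : ℕ) {x₁ x₂ : ℤ → A} {i : ℤ}
    (hx : Set.EqOn x₁ x₂ (Set.Icc (i - s * m) (i + s * n))) :
    F^[s] x₁ i = F^[s] x₂ i := by
  induction s generalizing x₁ x₂ with
  | zero => simpa using hx (by simp : i ∈ Set.Icc (i - 0 * m) (i + 0 * n))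
  | succ s ih =>
    refine ih fun j hj => ?_
    simp only [hf]
    congr 1
    funext k
    have hk := k.isLt
    simp only [Set.mem_Icc] at hj
    refine hx ⟨?_, ?_⟩ <;> push_cast <;> nlinarith

theorem iterate_add_apply_eq_of_right_half_eq
    (hf : ∀ x i, F x i = f fun k => x (i - (m : ℤ) + (k.val : ℤ)))
    {x : ℤ → A} {t : ℕ} (hfrac : ∀ j : ℕ, F^[t] x j = x j) (σ : ℕ) {j : ℤ} (hj : σ * m ≤ j) :
    F^[σ + t] x j = F^[σ] x j := by
  rw [Function.iterate_add_apply]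
  refine iterate_apply_eq_of_eqOn hf σ fun i hi => ?_
  lift i to ℕ using by linarith [hi.1]
  exact hfrac i

theorem iterate_apply_eq_iterate_mod_apply
    (hf : ∀ x i, F x i = f fun k => x (i - (m : ℤ) + (k.val : ℤ)))
    {x : ℤ → A} {t : ℕ} (hfrac : ∀ j : ℕ, F^[t] x j = x j) (σ : ℕ) {j : ℤ} (hj : σ * m ≤ j) :
    F^[σ] x j = F^[σ % t] x j := by
  induction σ using Nat.strong_induction_on with
  | _ σ ih =>
    rcases lt_or_ge σ t with hσ | hσ
    · rw [Nat.mod_eq_of_lt hσ]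
    rcases t.eq_zero_or_pos with rfl | ht
    · rw [Nat.mod_zero]
    obtain ⟨τ, rfl⟩ := Nat.exists_eq_add_of_le' hσ
    have hτ : (τ : ℤ) * m ≤ j := le_trans (by gcongr; omega) hj
    rw [iterate_add_apply_eq_of_right_half_eq hf hfrac τ hτ, Nat.add_mod_right]
    exact ih τ (by omega) hτ

theorem iterate_apply_eq_of_spaceTimeBlock_eq
    (hf : ∀ x i, F x i = f fun k => x (i - (m : ℤ) + (k.val : ℤ)))
    {x : ℤ → A} {t w : ℕ} (hfrac : ∀ j : ℕ, F^[t] x j = x j) (ht : 0 < t) {j₁ j₂ : ℤ}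
    (hblock : spaceTimeBlock F x w t j₁ = spaceTimeBlock F x w t j₂) {σ a : ℕ} (ha : a < w)
    (h₁ : σ * m ≤ j₁) (h₂ : σ * m ≤ j₂) :
    F^[σ] x (j₁ + a) = F^[σ] x (j₂ + a) := by
  have ha₀ : (0 : ℤ) ≤ a := a.cast_nonneg
  rw [iterate_apply_eq_iterate_mod_apply hf hfrac σ (by linarith),
    iterate_apply_eq_iterate_mod_apply hf hfrac σ (by linarith)]
  exact congrFun (congrFun hblock ⟨a, ha⟩) ⟨σ % t, Nat.mod_lt σ ht⟩

theorem LeftExpansive.spaceTimeBlock_eq_of_succ {h d w : ℕ} (hexp : LeftExpansive F h d w)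
    (hf : ∀ x i, F x i = f fun k => x (i - (m : ℤ) + (k.val : ℤ)))
    {x : ℤ → A} {t : ℕ} (hfrac : ∀ j : ℕ, F^[t] x j = x j) (ht : 0 < t) {j₁ j₂ : ℤ}
    (h₁ : (((h + 1) * t + d) * m : ℕ) ≤ j₁) (h₂ : (((h + 1) * t + d) * m : ℕ) ≤ j₂)
    (hblock : spaceTimeBlock F x w t (j₁ + 1) = spaceTimeBlock F x w t (j₂ + 1)) :
    spaceTimeBlock F x w t j₁ = spaceTimeBlock F x w t j₂ := by
  have hcone : ∀ σ : ℕ, σ ≤ (h + 1) * t + d → ∀ j : ℤ,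
      (((h + 1) * t + d) * m : ℕ) ≤ j → (σ : ℤ) * m ≤ j := fun σ hσ j hj =>
    le_trans (by exact_mod_cast Nat.mul_le_mul_right m hσ) hj
  funext a r
  rcases a with ⟨_ | a, ha⟩
  · -- Left expansivity at time `h * t + r ≡ r [MOD t]`: the rectangle stays below time
    -- `(h + 1) * t + d`, hence inside the cone.
    have hr := r.isLt
    have hN : (h + 1) * t = t * h + t := by ring
    have key := hexp x x (j₁ + 1) (j₂ + 1) (r + t * h) (r + t * h) (by nlinarith) (by nlinarith)
      fun a b ha hb₁ hb₂ => iterate_apply_eq_of_spaceTimeBlock_eq hf hfrac ht hblock ha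
        (hcone _ (by omega) _ (by linarith)) (hcone _ (by omega) _ (by linarith))
    simp only [add_sub_cancel_right] at key
    rw [iterate_apply_eq_iterate_mod_apply hf hfrac _ (hcone _ (by nlinarith) _ h₁),
      iterate_apply_eq_iterate_mod_apply hf hfrac _ (hcone _ (by nlinarith) _ h₂),
      Nat.add_mul_mod_self_left, Nat.mod_eq_of_lt hr] at key
    simpa [spaceTimeBlock] using key
  · have hshift := congrFun (congrFun hblock ⟨a, by omega⟩) r
    simp only [spaceTimeBlock] at hshift ⊢
    rwa [Nat.cast_succ, add_comm (a : ℤ), ← add_assoc, ← add_assoc]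

end LocalRule

/-- If `F` is a left expansive CA, `x ∈ A^ℤ`, and there exists `t ≥ 1` such that the
right halves of `F^t(x)` and `x` agree, then `x` is eventually periodic. -/
theorem stmt_10 {A : Type*} [Fintype A] (F : (ℤ → A) → ℤ → A) (hF : IsCA F)
    (hexp : ∃ h d w : ℕ, 1 ≤ w ∧ LeftExpansive F h d w)
    (x : ℤ → A) (t : ℕ) (ht : 1 ≤ t)
    (hfrac : ∀ j : ℕ, F^[t] x (j : ℤ) = x (j : ℤ)) :
    EvPeriodicConfig x := by
  obtain ⟨m, n, f, hf⟩ := hF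
  obtain ⟨h, d, w, hw, hexp⟩ := hexp
  set J : ℤ := ((((h + 1) * t + d) * m : ℕ) : ℤ)
  obtain ⟨q, hq, hper⟩ := Function.exists_periodic_of_succ_eq_succ
    (fun k : ℕ => spaceTimeBlock F x w t (J + k)) fun a b hab =>
      hexp.spaceTimeBlock_eq_of_succ hf hfrac ht (by omega) (by omega)
        (by simpa [add_assoc] using hab)
  refine ⟨q, hq, J, fun i hi => ?_⟩
  obtain ⟨k, rfl⟩ : ∃ k : ℕ, i = J + k := ⟨(i - J).toNat, by omega⟩
  simpa [spaceTimeBlock, add_assoc] using congrFun (congrFun (hper k) ⟨0, hw⟩) ⟨0, ht⟩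
end

section
/- If F: A^Z → A^Z is a rapidly left expansive cellular automaton and x is a number-like configuration, then the sequence (frac(F^t(x)))_{t∈N} has infinitely many limit points in A^N with respect to the product topology. -/
/-- A configuration is number-like: nonzero, and zero at all sufficiently small coordinates. -/
def NumberLike {A : Type*} [Zero A] (x : ℤ → A) : Prop :=
  (∃ i, x i ≠ 0) ∧ ∃ N : ℤ, ∀ i < N, x i = 0

/-- The left edge of a configuration: the least coordinate with a nonzero symbol. -/
noncomputable def lbound {A : Type*} [Zero A] (x : ℤ → A) : ℤ :=
  sInf {N : ℤ | x N ≠ 0}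

/-- `F` is left spreading on number-like configurations. -/
def LeftSpreading {A : Type*} [Zero A] (F : (ℤ → A) → ℤ → A) : Prop :=
  F (fun _ => 0) = (fun _ => 0) ∧
    ∀ x, NumberLike x → ∃ t : ℕ, 1 ≤ t ∧ lbound (F^[t] x) < lbound x

/-- The spreading speed of `F`:
`sup` over number-like `x` of `limsup_t (-lbound(F^t(x)))/t`. -/
noncomputable def spreadingSpeed {A : Type*} [Zero A] (F : (ℤ → A) → ℤ → A) : ℝ :=
  ⨆ x : {x : ℤ → A // NumberLike x},
    Filter.limsup (fun t : ℕ => -((lbound (F^[t] x.1) : ℝ)) / (t : ℝ)) Filter.atTop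

/-- `F` is rapidly left expansive with width `w`: left expansive with dimensions `(h,d,w)`,
left spreading with spreading speed `s`, and `s < 1/h` (equivalently `s * h < 1`,
which also covers the case `h = 0`). -/
def RapidlyLeftExpansive {A : Type*} [Zero A] (F : (ℤ → A) → ℤ → A) (w : ℕ) : Prop :=
  ∃ h d : ℕ, LeftExpansive F h d w ∧ LeftSpreading F ∧ spreadingSpeed F * (h : ℝ) < 1

/-- `z` is a limit point of the sequence `u` of one-sided sequences, in the product
(prodiscrete) topology on `A^ℕ`: some subsequence of `u` converges to `z`. -/
def LimitPoint {A : Type*} (u : ℕ → ℕ → A) (z : ℕ → A) : Prop :=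
  ∃ φ : ℕ → ℕ, StrictMono φ ∧ ∀ n : ℕ, ∃ N : ℕ, ∀ k, N ≤ k → ∀ j ≤ n, u (φ k) j = z j

open Filter

section

variable {A : Type*}

section Edge

variable [Zero A] {y y' : ℤ → A}

theorem NumberLike.bddBelow (hy : NumberLike y) : BddBelow {i | y i ≠ 0} := by
  obtain ⟨N, hN⟩ := hy.2
  exact ⟨N, fun i hi => not_lt.1 fun h => hi (hN i h)⟩

theorem NumberLike.apply_lbound_ne_zero (hy : NumberLike y) : y (lbound y) ≠ 0 :=
  Int.csInf_mem hy.1 hy.bddBelow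

theorem NumberLike.lbound_le (hy : NumberLike y) {i : ℤ} (hi : y i ≠ 0) : lbound y ≤ i :=
  csInf_le hy.bddBelow hi

theorem NumberLike.eq_zero_of_lt_lbound (hy : NumberLike y) {i : ℤ} (hi : i < lbound y) :
    y i = 0 :=
  not_not.1 fun hne => (hy.lbound_le hne).not_gt hi

theorem lbound_zero : lbound (fun _ : ℤ => (0 : A)) = 0 := by
  simp [lbound]

theorem NumberLike.comp_add_const (hy : NumberLike y) (k : ℤ) : NumberLike fun i => y (i + k) := by
  obtain ⟨⟨i, hi⟩, N, hN⟩ := hy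
  exact ⟨⟨i - k, by simpa using hi⟩, N - k, fun j hj => hN _ (by omega)⟩

theorem NumberLike.lbound_comp_add_const (hy : NumberLike y) (k : ℤ) :
    lbound (fun i => y (i + k)) = lbound y - k := by
  have h₁ := (hy.comp_add_const k).lbound_le (i := lbound y - k) (by simpa using hy.apply_lbound_ne_zero)
  have h₂ := hy.lbound_le (hy.comp_add_const k).apply_lbound_ne_zero
  omega

theorem min_lbound_le_of_eqOn (hy : NumberLike y) (hy' : NumberLike y') {K P : ℤ}
    (hK : K ≤ lbound y) (hyy' : ∀ i, K ≤ i → i ≤ P → y i = y' i) :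
    min (lbound y') (P + 1) ≤ min (lbound y) (P + 1) := by
  by_cases hP : lbound y ≤ P
  · have := hy'.lbound_le ((hyy' _ hK hP) ▸ hy.apply_lbound_ne_zero)
    omega
  · omega

theorem min_lbound_eq_of_eqOn (hy : NumberLike y) (hy' : NumberLike y') {K P : ℤ}
    (hK : K ≤ lbound y) (hK' : K ≤ lbound y') (hyy' : ∀ i, K ≤ i → i ≤ P → y i = y' i) :
    min (lbound y) (P + 1) = min (lbound y') (P + 1) :=
  le_antisymm (min_lbound_le_of_eqOn hy' hy hK' fun i h₁ h₂ => (hyy' i h₁ h₂).symm)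
    (min_lbound_le_of_eqOn hy hy' hK hyy')

end Edge

theorem EvPeriodicSeq.finite_range {B : Type*} {y : ℕ → B} (hy : EvPeriodicSeq y) :
    (Set.range y).Finite := by
  obtain ⟨p, hp, c, hc⟩ := hy
  refine ((Set.finite_Iio (c + p)).image y).subset ?_
  rintro _ ⟨t, rfl⟩
  induction t using Nat.strong_induction_on with
  | _ t ih =>
    by_cases ht : t < c + p
    · exact ⟨t, ht, rfl⟩
    · obtain ⟨s, rfl⟩ : ∃ s, t = s + p := ⟨t - p, by omega⟩
      rw [hc s (by omega)]
      exact ih s (by omega)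

section LimitPoints

variable [Finite A]

theorem exists_limitPoint (u : ℕ → ℕ → A) : ∃ z, LimitPoint u z := by
  let _ : TopologicalSpace A := ⊥
  have : DiscreteTopology A := ⟨rfl⟩
  obtain ⟨z, -, φ, hφ, hlim⟩ := isCompact_univ.tendsto_subseq (x := u) fun _ => Set.mem_univ _
  have hcoord : ∀ j, ∀ᶠ k in atTop, u (φ k) j = z j := fun j => by
    simpa [nhds_discrete, tendsto_pure] using tendsto_pi_nhds.1 hlim j
  exact ⟨z, φ, hφ, fun N => eventually_atTop.1 ((Set.finite_Iic N).eventually_all.2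
    fun j _ => hcoord j)⟩

theorem eventually_exists_limitPoint_eqOn (u : ℕ → ℕ → A) (P : ℕ) :
    ∀ᶠ t in atTop, ∃ z, LimitPoint u z ∧ ∀ j ≤ P, u t j = z j := by
  by_contra hfar
  obtain ⟨ψ, hψ, hψfar⟩ := extraction_of_frequently_atTop (not_eventually.1 hfar)
  obtain ⟨z, φ, hφ, hconv⟩ := exists_limitPoint (u ∘ ψ)
  obtain ⟨N, hN⟩ := hconv P
  exact hψfar (φ N) ⟨z, ⟨ψ ∘ φ, hψ.comp hφ, hconv⟩, hN N le_rfl⟩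

end LimitPoints

theorem Set.Finite.exists_forall_eq_of_eventuallyEq {Λ : Set (ℕ → A)} (hΛ : Λ.Finite) :
    ∃ J, ∀ z ∈ Λ, ∀ z' ∈ Λ, z =ᶠ[atTop] z' → ∀ j, J ≤ j → z j = z' j := by
  have : ∀ᶠ J in atTop, ∀ zz ∈ Λ ×ˢ Λ,
      zz.1 =ᶠ[atTop] zz.2 → ∀ j, J ≤ j → zz.1 j = zz.2 j := by
    refine (hΛ.prod hΛ).eventually_all.2 fun zz _ => ?_
    by_cases hzz : zz.1 =ᶠ[atTop] zz.2
    · exact (eventually_forall_ge_atTop.2 hzz).mono fun _ hJ _ => hJ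
    · exact Eventually.of_forall fun _ h => absurd h hzz
  obtain ⟨J, hJ⟩ := this.exists
  exact ⟨J, fun z hz z' hz' => hJ (z, z') ⟨hz, hz'⟩⟩

theorem Set.Finite.exists_eventuallyEq_of_eqOn {Λ : Set (ℕ → A)} (hΛ : Λ.Finite) (K : ℕ) :
    ∃ Q, ∀ z ∈ Λ, ∀ z' ∈ Λ, (∀ j, K ≤ j → j ≤ Q → z j = z' j) → z =ᶠ[atTop] z' := by
  have : ∀ᶠ Q in atTop, ∀ zz ∈ Λ ×ˢ Λ,
      (∀ j, K ≤ j → j ≤ Q → zz.1 j = zz.2 j) → zz.1 =ᶠ[atTop] zz.2 := by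
    refine (hΛ.prod hΛ).eventually_all.2 fun zz _ => ?_
    by_cases hzz : zz.1 =ᶠ[atTop] zz.2
    · exact Eventually.of_forall fun _ _ => hzz
    · obtain ⟨j, hKj, hj⟩ := frequently_atTop.1 (not_eventually.1 hzz) K
      exact (eventually_ge_atTop j).mono fun Q hjQ hagree => absurd (hagree j hKj hjQ) hj
  obtain ⟨Q, hQ⟩ := this.exists
  exact ⟨Q, fun z hz z' hz' => hQ (z, z') ⟨hz, hz'⟩⟩

theorem exists_periodic_of_step {α : Type*} {s : Set α} (hs : s.Finite) {c : ℕ → α}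
    (hc : ∀ t, c t ∈ s) {r : α → α → Prop} (hr : ∀ a, r a a)
    (hstep : ∀ t t', r (c t) (c t') → r (c (t + 1)) (c (t' + 1))) :
    ∃ t₀ p, 0 < p ∧ ∀ t, t₀ ≤ t → r (c t) (c (t + p)) := by
  obtain ⟨a, b, hab, hcab⟩ := hs.exists_lt_map_eq_of_forall_mem hc
  refine ⟨a, b - a, by omega, fun t ht => ?_⟩
  induction t, ht using Nat.le_induction with
  | base => rw [Nat.add_sub_cancel' hab.le, hcab]; exact hr _
  | succ t _ ih => simpa only [Nat.add_right_comm t 1] using hstep _ _ ih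

theorem exists_eventually_periodic_window [Finite A] {u : ℕ → ℕ → A} {m n : ℕ}
    (hloc : ∀ t t' j, m ≤ j → (∀ k, j ≤ k + m → k ≤ j + n → u t k = u t' k) →
      u (t + 1) j = u (t' + 1) j)
    (hΛ : {z | LimitPoint u z}.Finite) :
    ∃ J, ∀ W, ∃ t₀ p, 0 < p ∧ ∀ t, t₀ ≤ t → ∀ j, J ≤ j → j ≤ J + W → u (t + p) j = u t j := by
  obtain ⟨J, hJ⟩ := hΛ.exists_forall_eq_of_eventuallyEq
  refine ⟨J, fun W => ?_⟩
  obtain ⟨Q, hQ⟩ := hΛ.exists_eventuallyEq_of_eqOn (J + m)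
  obtain ⟨T, hT⟩ := eventually_atTop.1 (eventually_exists_limitPoint_eqOn u (Q + n + J + W))
  choose c hcΛ hcu using fun s => hT (T + s) (Nat.le_add_right T s)
  have hstep : ∀ s s', c s =ᶠ[atTop] c s' → c (s + 1) =ᶠ[atTop] c (s' + 1) := by
    intro s s' hss'
    refine hQ _ (hcΛ _) _ (hcΛ _) fun j hj₁ hj₂ => ?_
    rw [← hcu (s + 1) j (by omega), ← hcu (s' + 1) j (by omega)]
    refine hloc (T + s) (T + s') j (by omega) fun k hk₁ hk₂ => ?_
    rw [hcu s k (by omega), hcu s' k (by omega)]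
    exact hJ _ (hcΛ s) _ (hcΛ s') hss' k (by omega)
  obtain ⟨s₀, p, hp, hper⟩ := exists_periodic_of_step hΛ hcΛ (fun _ => EventuallyEq.rfl) hstep
  refine ⟨T + s₀, p, hp, fun t ht j hj₁ hj₂ => ?_⟩
  obtain ⟨s, rfl⟩ : ∃ s, t = T + s := ⟨t - T, by omega⟩
  rw [Nat.add_assoc, hcu _ j (by omega), hcu s j (by omega)]
  exact (hJ _ (hcΛ _) _ (hcΛ _) (hper s (by omega)) j hj₁).symm

def HasLocalRule (F : (ℤ → A) → ℤ → A) (m n : ℕ) (f : (Fin (m + n + 1) → A) → A) : Prop :=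
  ∀ x i, F x i = f fun k => x (i - m + k)

namespace HasLocalRule

variable {F : (ℤ → A) → ℤ → A} {m n : ℕ} {f : (Fin (m + n + 1) → A) → A}

theorem apply_eq_of_eqOn (hf : HasLocalRule F m n f) {x y : ℤ → A} {i : ℤ}
    (hxy : ∀ j, i - m ≤ j → j ≤ i + n → x j = y j) : F x i = F y i := by
  rw [hf, hf]
  congr 1
  funext k
  exact hxy _ (by omega) (by have := k.2; omega)

theorem iterate_succ_eq_of_eqOn (hf : HasLocalRule F m n f) (x : ℤ → A) (t t' j : ℕ)
    (hj : m ≤ j) (hxy : ∀ k : ℕ, j ≤ k + m → k ≤ j + n → F^[t] x k = F^[t'] x k) :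
    F^[t + 1] x j = F^[t' + 1] x j := by
  rw [Function.iterate_succ_apply', Function.iterate_succ_apply']
  refine hf.apply_eq_of_eqOn fun k hk₁ hk₂ => ?_
  lift k to ℕ using (by omega)
  exact hxy k (by omega) (by omega)

theorem apply_comp_add_const (hf : HasLocalRule F m n f) (x : ℤ → A) (k : ℤ) :
    F (fun i => x (i + k)) = fun i => F x (i + k) := by
  funext i
  rw [hf, hf]
  congr 1
  funext j
  congr 1
  ring

variable [Zero A]

theorem apply_eq_zero_of_lt (hf : HasLocalRule F m n f) (hF0 : F (fun _ => 0) = fun _ => 0)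
    {x : ℤ → A} {N : ℤ} (hx : ∀ j < N, x j = 0) {i : ℤ} (hi : i < N - n) : F x i = 0 := by
  rw [hf.apply_eq_of_eqOn (y := fun _ => 0) fun j _ hj => hx j (by omega), hF0]

theorem numberLike_apply (hf : HasLocalRule F m n f) (hsp : LeftSpreading F) {x : ℤ → A}
    (hx : NumberLike x) : NumberLike (F x) := by
  refine ⟨?_, lbound x - n, fun i hi => hf.apply_eq_zero_of_lt hsp.1
    (fun j hj => hx.eq_zero_of_lt_lbound hj) hi⟩
  by_contra! hFx
  -- Normalise `x` so that its left edge is `0`, the junk value of `lbound` at `0^ℤ`.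
  set x₀ := fun i => x (i + lbound x)
  have hx₀ : ∀ s, 1 ≤ s → F^[s] x₀ = fun _ => 0 := by
    intro s hs
    obtain ⟨s, rfl⟩ : ∃ s', s = s' + 1 := ⟨s - 1, by omega⟩
    rw [Function.iterate_succ_apply, hf.apply_comp_add_const]
    simp only [hFx]
    exact Function.iterate_fixed hsp.1 s
  obtain ⟨s, hs, hlt⟩ := hsp.2 x₀ (hx.comp_add_const _)
  rw [hx₀ s hs, lbound_zero, hx.lbound_comp_add_const, sub_self] at hlt
  exact lt_irrefl 0 hlt

theorem iterate_numberLike (hf : HasLocalRule F m n f) (hsp : LeftSpreading F) {x : ℤ → A}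
    (hx : NumberLike x) (t : ℕ) : NumberLike (F^[t] x) := by
  induction t with
  | zero => exact hx
  | succ t ih => rw [Function.iterate_succ_apply']; exact hf.numberLike_apply hsp ih

theorem lbound_sub_mul_le_lbound_iterate (hf : HasLocalRule F m n f) (hsp : LeftSpreading F)
    {x : ℤ → A} (hx : NumberLike x) (t : ℕ) : lbound x - t * n ≤ lbound (F^[t] x) := by
  induction t with
  | zero => simp
  | succ t ih =>
    have hxt := hf.iterate_numberLike hsp hx t
    have hstep : lbound (F^[t] x) - n ≤ lbound (F^[t + 1] x) := by
      rw [Function.iterate_succ_apply']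
      by_contra! hlt
      exact (hf.iterate_numberLike hsp hx (t + 1)).apply_lbound_ne_zero (by
        rw [Function.iterate_succ_apply']
        exact hf.apply_eq_zero_of_lt hsp.1 (fun j hj => hxt.eq_zero_of_lt_lbound hj) hlt)
    push_cast
    linarith

theorem not_bddBelow_range_lbound_iterate (hf : HasLocalRule F m n f) (hsp : LeftSpreading F)
    {x : ℤ → A} (hx : NumberLike x) : ¬ BddBelow (Set.range fun t => lbound (F^[t] x)) := by
  have hdesc : ∀ k : ℕ, ∃ t, lbound (F^[t] x) + k ≤ lbound x := by
    intro k
    induction k with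
    | zero => exact ⟨0, by simp⟩
    | succ k ih =>
      obtain ⟨t, ht⟩ := ih
      obtain ⟨s, -, hs⟩ := hsp.2 _ (hf.iterate_numberLike hsp hx t)
      refine ⟨s + t, ?_⟩
      rw [Function.iterate_add_apply]
      push_cast
      omega
  rintro ⟨B, hB⟩
  obtain ⟨t, ht⟩ := hdesc (lbound x - B + 1).toNat
  have : B ≤ lbound (F^[t] x) := hB ⟨t, rfl⟩
  omega

theorem eventually_neg_lbound_iterate_div_le (hf : HasLocalRule F m n f) (hsp : LeftSpreading F)
    {x : ℤ → A} (hx : NumberLike x) :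
    ∀ᶠ t : ℕ in atTop, -(lbound (F^[t] x) : ℝ) / t ≤ n + 1 := by
  filter_upwards [eventually_ge_atTop ((-lbound x).toNat ⊔ 1)] with t ht
  have ht₀ : (-lbound x : ℝ) ≤ t := by exact_mod_cast (show -lbound x ≤ t by omega)
  have ht₁ : (0 : ℝ) < t := by exact_mod_cast (show 0 < t by omega)
  have hlb : (lbound x : ℝ) - t * n ≤ lbound (F^[t] x) := by
    exact_mod_cast hf.lbound_sub_mul_le_lbound_iterate hsp hx t
  rw [div_le_iff₀ ht₁]
  linarith

theorem limsup_le_spreadingSpeed (hf : HasLocalRule F m n f) (hsp : LeftSpreading F)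
    {x : ℤ → A} (hx : NumberLike x) :
    limsup (fun t : ℕ => -(lbound (F^[t] x) : ℝ) / t) atTop ≤ spreadingSpeed F := by
  refine le_ciSup (f := fun y : {y : ℤ → A // NumberLike y} =>
    limsup (fun t : ℕ => -(lbound (F^[t] y.1) : ℝ) / t) atTop) ⟨n + 1, ?_⟩ ⟨x, hx⟩
  rintro _ ⟨⟨y, hy⟩, rfl⟩
  dsimp only
  rw [limsup_eq]
  by_cases hb : BddBelow {a : ℝ | ∀ᶠ t : ℕ in atTop, -(lbound (F^[t] y) : ℝ) / t ≤ a}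
  · exact csInf_le hb (hf.eventually_neg_lbound_iterate_div_le hsp hy)
  · rw [Real.sInf_of_not_bddBelow hb]
    positivity

theorem exists_speed_bound (hf : HasLocalRule F m n f) (hsp : LeftSpreading F) {h : ℕ}
    (hs : spreadingSpeed F * h < 1) {x : ℤ → A} (hx : NumberLike x) :
    ∃ c : ℝ, 0 ≤ c ∧ c * h < 1 ∧ ∀ᶠ t : ℕ in atTop, -(lbound (F^[t] x) : ℝ) ≤ c * t := by
  obtain ⟨c, hsc, hch⟩ : ∃ c : ℝ, max (spreadingSpeed F) 0 < c ∧ c * h < 1 := by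
    rcases Nat.eq_zero_or_pos h with rfl | hh
    · exact ⟨max (spreadingSpeed F) 0 + 1, by linarith, by simp⟩
    · have hh : (0 : ℝ) < h := by exact_mod_cast hh
      obtain ⟨c, hc₁, hc₂⟩ := exists_between (show max (spreadingSpeed F) 0 < 1 / h from
        max_lt ((lt_div_iff₀ hh).2 (by simpa using hs)) (by positivity))
      exact ⟨c, hc₁, (lt_div_iff₀ hh).1 hc₂⟩
  refine ⟨c, (le_max_right _ _).trans hsc.le, hch, ?_⟩
  have hlt := eventually_lt_of_limsup_lt ((hf.limsup_le_spreadingSpeed hsp hx).trans_lt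
    ((le_max_left _ _).trans_lt hsc)) ⟨n + 1, hf.eventually_neg_lbound_iterate_div_le hsp hx⟩
  filter_upwards [hlt, eventually_ge_atTop 1] with t ht ht₁
  rw [div_lt_iff₀ (by exact_mod_cast ht₁)] at ht
  exact ht.le

end HasLocalRule

namespace LeftExpansive

variable {F : (ℤ → A) → ℤ → A} {h d w : ℕ}

theorem iterate_eq_of_eqOn_strip (hexp : LeftExpansive F h d w) {x y : ℤ → A} {t₀ : ℕ}
    {J P : ℤ} (hJP : J + w ≤ P + 1)
    (hstrip : ∀ t, t₀ ≤ t → ∀ i, J ≤ i → i ≤ P → F^[t] x i = F^[t] y i) (N : ℕ) :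
    ∀ t, t₀ + N * h ≤ t → ∀ i, J - N ≤ i → i ≤ P → F^[t] x i = F^[t] y i := by
  induction N with
  | zero => simpa using hstrip
  | succ N ih =>
    intro t ht i hi₁ hi₂
    have hNt : t₀ + N * h + h ≤ t := by rw [Nat.succ_mul, ← Nat.add_assoc] at ht; exact ht
    by_cases hi : J - N ≤ i
    · exact ih t (by omega) i hi hi₂
    obtain rfl : i = J - N - 1 := by push_cast at hi₁; omega
    refine hexp x y (J - N) (J - N) t t (by omega) (by omega) fun a b ha hb₁ hb₂ => ?_
    exact ih _ (by omega) _ (by omega) (by omega)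

theorem evPeriodicSeq_min_lbound [Zero A] (hexp : LeftExpansive F h d w) {x : ℤ → A}
    (hx : ∀ t, NumberLike (F^[t] x)) {J t₀ p : ℕ} (hp : 0 < p)
    (hstrip : ∀ t, t₀ ≤ t → ∀ i : ℤ, J ≤ i → i ≤ J + w → F^[t + p] x i = F^[t] x i)
    {c : ℝ} (hc₀ : 0 ≤ c) (hch : c * h < 1)
    (hc : ∀ᶠ t : ℕ in atTop, -(lbound (F^[t] x) : ℝ) ≤ c * t) :
    EvPeriodicSeq fun t => min (lbound (F^[t] x)) (J + w + 1) := by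
  have hlin : ∀ᶠ t : ℕ in atTop, t₀ + (J + c * (t + p) + 1) * h ≤ (t : ℝ) := by
    have := (tendsto_natCast_atTop_atTop (R := ℝ)).const_mul_atTop (sub_pos.2 hch)
    filter_upwards [this.eventually_ge_atTop (t₀ + (J + c * p + 1) * h)] with t ht
    linarith
  obtain ⟨T, hT⟩ := eventually_atTop.1
    (hlin.and (hc.and ((tendsto_add_atTop_nat p).eventually hc)))
  refine ⟨p, hp, T, fun t ht => ?_⟩
  obtain ⟨hlint, hct, hctp⟩ := hT t ht
  push_cast at hctp
  -- `N` columns of the staircase reach past both left edges by time `t`, as `c * h < 1`.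
  set N := ⌈(J : ℝ) + c * (t + p)⌉₊
  have hN : (J : ℝ) + c * (t + p) ≤ N := Nat.le_ceil _
  have hN' : (N : ℝ) < J + c * (t + p) + 1 := Nat.ceil_lt_add_one (by positivity)
  have htN : t₀ + N * h ≤ t := by
    have : (t₀ + N * h : ℝ) ≤ t := by nlinarith
    exact_mod_cast this
  have hKt : (J : ℤ) - N ≤ lbound (F^[t] x) := by
    have : ((J : ℤ) - N : ℝ) ≤ lbound (F^[t] x) := by push_cast; nlinarith
    exact_mod_cast this
  have hKtp : (J : ℤ) - N ≤ lbound (F^[t + p] x) := by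
    have : ((J : ℤ) - N : ℝ) ≤ lbound (F^[t + p] x) := by push_cast; nlinarith
    exact_mod_cast this
  have hagree := hexp.iterate_eq_of_eqOn_strip (x := F^[p] x) (y := x) (J := J) (P := J + w)
    (by omega)
    (fun t ht i hi₁ hi₂ => by rw [← Function.iterate_add_apply]; exact hstrip t ht i hi₁ hi₂)
    N t htN
  exact min_lbound_eq_of_eqOn (hx _) (hx _) hKtp hKt fun i hi₁ hi₂ => by
    rw [Function.iterate_add_apply]; exact hagree i hi₁ hi₂

end LeftExpansive

end

theorem stmt_14_general {A : Type*} [Zero A] [Fintype A] (F : (ℤ → A) → ℤ → A) (hF : IsCA F)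
    (w : ℕ) (hre : RapidlyLeftExpansive F w)
    (x : ℤ → A) (hx : NumberLike x) :
    {z : ℕ → A | LimitPoint (fun t j => F^[t] x (j : ℤ)) z}.Infinite := by
  obtain ⟨m, n, f, hf⟩ := hF
  obtain ⟨h, d, hexp, hsp, hs⟩ := hre
  intro hfin
  obtain ⟨J, hJ⟩ := exists_eventually_periodic_window
    (fun t t' j hj hagree => HasLocalRule.iterate_succ_eq_of_eqOn hf x t t' j hj hagree) hfin
  obtain ⟨t₀, p, hp, hper⟩ := hJ w
  obtain ⟨c, hc₀, hch, hc⟩ := HasLocalRule.exists_speed_bound hf hsp hs hx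
  have hedge := hexp.evPeriodicSeq_min_lbound (J := J) (t₀ := t₀)
    (HasLocalRule.iterate_numberLike hf hsp hx) hp
    (fun t ht i hi₁ hi₂ => by lift i to ℕ using (by omega); exact hper t ht i (by omega) (by omega))
    hc₀ hch hc
  obtain ⟨B, hB⟩ := hedge.finite_range.bddBelow
  exact HasLocalRule.not_bddBelow_range_lbound_iterate hf hsp hx
    ⟨B, by rintro _ ⟨t, rfl⟩; exact (hB ⟨t, rfl⟩).trans (min_le_left _ _)⟩

/-- If `F` is a rapidly left expansive CA and `x` is number-like, then the sequence
`(frac(F^t(x)))_t` has infinitely many limit points in `A^ℕ`. -/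
theorem stmt_14 {A : Type*} [Zero A] [Fintype A] (F : (ℤ → A) → ℤ → A) (hF : IsCA F)
    (w : ℕ) (hw : 1 ≤ w) (hre : RapidlyLeftExpansive F w)
    (x : ℤ → A) (hx : NumberLike x) :
    {z : ℕ → A | LimitPoint (fun t j => F^[t] x (j : ℤ)) z}.Infinite :=
  stmt_14_general F hF w hre x hx
end
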